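/- Let P be a poset, I ⊆ P an interval, L a lower fence of I and U an upper fence of I, and let Γ be a path in I that is the concatenation of a path through L, an arbitrary connecting path in I, and a path through U. Then the generalized rank of M over I equals the rank of the canonical limit-to-colimit map of the restriction of M to Γ: rank(M|_I) = rank(M|_Γ). -/

import Mathlib

open CategoryTheory Limits

variable (K : Type) [Field K] {P : Type} [PartialOrder P]

/-- Zigzag-connectedness of a subset of a poset. -/
def ConnectedIn (I : Set P) : Prop :=
  ∀ p ∈ I, ∀ q ∈ I, Relation.ReflTransGen (fun a b => a ∈ I ∧ b ∈ I ∧ (a ≤ b ∨ b ≤ a)) p q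

/-- Convexity of a subset of a poset. -/
def ConvexIn (I : Set P) : Prop :=
  ∀ ⦃p q r : P⦄, p ∈ I → r ∈ I → p ≤ q → q ≤ r → q ∈ I

/-- An interval of a poset: nonempty, convex and connected. -/
def IsIntervalSet (I : Set P) : Prop :=
  I.Nonempty ∧ ConvexIn I ∧ ConnectedIn I

/-- Restriction of a persistence module to a subset of the indexing poset. -/
def restrict (M : P ⥤ ModuleCat.{0} K) (I : Set P) : I ⥤ ModuleCat.{0} K :=
  (Monotone.functor (f := (Subtype.val : I → P)) (fun _ _ h => h)) ⋙ M

/-- The canonical limit-to-colimit map `i_p ∘ π_p` of the restriction of `M` to `I`. -/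
noncomputable def canMap (M : P ⥤ ModuleCat.{0} K) (I : Set P) (p : P) (hp : p ∈ I) :
    limit (restrict K M I) ⟶ colimit (restrict K M I) :=
  limit.π (restrict K M I) ⟨p, hp⟩ ≫ colimit.ι (restrict K M I) ⟨p, hp⟩

open Classical in
/-- The generalized rank of `M` over `I` (for `I` an interval, independent of basepoint). -/
noncomputable def genRank (M : P ⥤ ModuleCat.{0} K) (I : Set P) : Cardinal :=
  if h : I.Nonempty then LinearMap.rank (canMap K M I h.choose h.choose_spec).hom else 0


/-- A lower fence of (the subposet) `I`. -/
def IsLowerFenceOf (I L : Set P) : Prop :=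
  L ⊆ I ∧ ConnectedIn L ∧ ∀ q ∈ I, (L ∩ {r | r ≤ q}).Nonempty ∧ ConnectedIn (L ∩ {r | r ≤ q})

/-- An upper fence of (the subposet) `I`. -/
def IsUpperFenceOf (I U : Set P) : Prop :=
  U ⊆ I ∧ ConnectedIn U ∧ ∀ q ∈ I, (U ∩ {r | q ≤ r}).Nonempty ∧ ConnectedIn (U ∩ {r | q ≤ r})

/-- The space of sections of a persistence module: compatible tuples. -/
def sectionsSubmodule (M : P ⥤ ModuleCat.{0} K) : Submodule K (∀ p, M.obj p) where
  carrier := {v | ∀ (p q : P) (h : p ≤ q), M.map h.hom (v p) = v q}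
  add_mem' := by intro a b ha hb p q h; simp [map_add, ha p q h, hb p q h]
  zero_mem' := by intro p q h; simp
  smul_mem' := by intro c a ha p q h; simp [map_smul, ha p q h]

open Classical in
/-- `⊤` if `b` holds, `⊥` otherwise; underlying space of an interval module at a point. -/
noncomputable def condSub (b : Prop) : Submodule K K := if b then ⊤ else ⊥

open Classical in
/-- The structure map of an interval module. -/
noncomputable def condMap (b c : Prop) : condSub K b →ₗ[K] condSub K c where
  toFun x := ⟨if b ∧ c then (x : K) else 0, by
    by_cases hc : c
    · simp [condSub, hc]
    · rw [if_neg (fun h => hc h.2)]; exact Submodule.zero_mem _⟩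
  map_add' x y := by ext; split_ifs <;> simp
  map_smul' r x := by ext; split_ifs <;> simp

lemma condMap_id (b : Prop) : condMap K b b = LinearMap.id := by
  classical
  ext x
  by_cases hb : b
  · simp [condMap, hb]
  · have hx : (x : K) = 0 := by
      have e : condSub K b = ⊥ := if_neg hb
      exact (Submodule.mem_bot K).1 (Eq.mp (congrArg (fun S => (x : K) ∈ S) e) x.2)
    simp [condMap, hb, hx]

lemma condMap_comp (b c d : Prop) (h : b → d → c) :
    (condMap K c d).comp (condMap K b c) = condMap K b d := by
  classical
  ext x
  by_cases hb : b <;> by_cases hc : c <;> by_cases hd : d <;>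
    simp [condMap, hb, hc, hd]
  exact absurd (h hb hd) hc

/-- The interval module supported on a convex set `S`. -/
noncomputable def IM (S : Set P) (hS : ConvexIn S) : P ⥤ ModuleCat.{0} K where
  obj p := ModuleCat.of K (condSub K (p ∈ S))
  map {p q} h := ModuleCat.ofHom (condMap K (p ∈ S) (q ∈ S))
  map_id p := by
    rw [condMap_id]
    rfl
  map_comp {p q r} h h' := by
    rw [← condMap_comp K (p ∈ S) (q ∈ S) (r ∈ S) (fun hp hr => hS hp hr h.le h'.le)]
    rfl


section Aux
variable (M : P ⥤ ModuleCat.{0} K)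



/-- Restriction map on limits. -/
noncomputable def resLim {S T : Set P} (h : S ⊆ T) :
    limit (restrict K M T) ⟶ limit (restrict K M S) :=
  limit.lift (restrict K M S)
    { pt := limit (restrict K M T)
      π := { app := fun x => limit.π (restrict K M T) ⟨x.1, h x.2⟩
             naturality := fun x y f => by
               rw [Functor.const_obj_map]
               refine (Category.id_comp _).trans ?_
               exact (limit.w (restrict K M T)
                 (homOfLE (show (⟨x.1, h x.2⟩ : T) ≤ ⟨y.1, h y.2⟩ from leOfHom f))).symm } }

lemma resLim_π {S T : Set P} (h : S ⊆ T) (x : P) (hxS : x ∈ S) (hxT : x ∈ T) :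
    resLim K M h ≫ limit.π (restrict K M S) ⟨x, hxS⟩ = limit.π (restrict K M T) ⟨x, hxT⟩ :=
  limit.lift_π _ _

/-- Inclusion map on colimits. -/
noncomputable def resColim {S T : Set P} (h : S ⊆ T) :
    colimit (restrict K M S) ⟶ colimit (restrict K M T) :=
  colimit.desc (restrict K M S)
    { pt := colimit (restrict K M T)
      ι := { app := fun x => colimit.ι (restrict K M T) ⟨x.1, h x.2⟩
             naturality := fun x y f => by
               rw [Functor.const_obj_map]
               refine Eq.trans ?_ (Category.comp_id _).symm
               exact colimit.w (restrict K M T)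
                 (homOfLE (show (⟨x.1, h x.2⟩ : T) ≤ ⟨y.1, h y.2⟩ from leOfHom f)) } }

lemma ι_resColim {S T : Set P} (h : S ⊆ T) (x : P) (hxS : x ∈ S) (hxT : x ∈ T) :
    colimit.ι (restrict K M S) ⟨x, hxS⟩ ≫ resColim K M h = colimit.ι (restrict K M T) ⟨x, hxT⟩ :=
  colimit.ι_desc _ _

/-- zigzag chains are connected -/
lemma chain_reaches (a : P) (t : List P)
    (hc : (a :: t).Chain' (fun a b => a ≤ b ∨ b ≤ a)) :
    ∀ y ∈ a :: t, Relation.ReflTransGen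
      (fun u v => u ∈ {x | x ∈ a :: t} ∧ v ∈ {x | x ∈ a :: t} ∧ (u ≤ v ∨ v ≤ u)) a y := by
  induction t generalizing a with
  | nil => intro y hy; simp at hy; subst hy; exact Relation.ReflTransGen.refl
  | cons b t' ih =>
      intro y hy
      rcases List.mem_cons.1 hy with rfl | hy'
      · exact Relation.ReflTransGen.refl
      · have hstep : Relation.ReflTransGen
            (fun u v => u ∈ {x | x ∈ a :: b :: t'} ∧ v ∈ {x | x ∈ a :: b :: t'} ∧ (u ≤ v ∨ v ≤ u)) a b :=
          Relation.ReflTransGen.single ⟨by simp, by simp, (List.isChain_cons_cons.1 hc).1⟩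
        have hrest := ih b (List.isChain_cons_cons.1 hc).2 y hy'
        exact hstep.trans (by
          refine Relation.ReflTransGen.mono ?_ _ _ hrest
          rintro u v ⟨h1, h2, h3⟩
          exact ⟨List.mem_cons_of_mem _ h1, List.mem_cons_of_mem _ h2, h3⟩)

lemma connectedIn_of_chain' (l : List P)
    (hc : l.Chain' (fun a b => a ≤ b ∨ b ≤ a)) : ConnectedIn {x | x ∈ l} := by
  intro p hp q hq
  cases l with
  | nil => simp at hp
  | cons a t =>
      have hsym : Symmetric (fun u v => u ∈ {x | x ∈ a :: t} ∧ v ∈ {x | x ∈ a :: t} ∧ (u ≤ v ∨ v ≤ u)) :=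
        fun u v ⟨h1, h2, h3⟩ => ⟨h2, h1, h3.symm⟩
      exact ((@Std.Symm.symm _ _ (@Relation.ReflTransGen.stdSymm _ _ ⟨fun _ _ h => hsym h⟩) _ _) (chain_reaches a t hc p hp)).trans
        (chain_reaches a t hc q hq)

lemma restrict_map (S : Set P) {x y : S} (h : x ≤ y) :
    (restrict K M S).map (homOfLE h) = M.map (homOfLE (Subtype.coe_le_coe.2 h)) := rfl

lemma lower_step (L : Set P) (q : P) {x c : P}
    (hx : x ∈ L ∩ {r | r ≤ q}) (hc : c ∈ L ∩ {r | r ≤ q}) (hxc : x ≤ c) :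
    limit.π (restrict K M L) ⟨x, hx.1⟩ ≫ M.map (homOfLE hx.2) =
    limit.π (restrict K M L) ⟨c, hc.1⟩ ≫ M.map (homOfLE hc.2) := by
  have w := limit.w (restrict K M L) (homOfLE (show (⟨x, hx.1⟩ : L) ≤ ⟨c, hc.1⟩ from hxc))
  rw [← w]
  exact (congrArg (limit.π (restrict K M L) ⟨x, hx.1⟩ ≫ ·) (M.map_comp (homOfLE hxc) (homOfLE hc.2))).trans (Category.assoc _ _ _).symm

lemma lower_indep (L : Set P) (q : P) (hconn : ConnectedIn (L ∩ {r | r ≤ q}))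
    {r1 r2 : P} (h1 : r1 ∈ L ∩ {r | r ≤ q}) (h2 : r2 ∈ L ∩ {r | r ≤ q}) :
    limit.π (restrict K M L) ⟨r1, h1.1⟩ ≫ M.map (homOfLE h1.2) =
    limit.π (restrict K M L) ⟨r2, h2.1⟩ ≫ M.map (homOfLE h2.2) := by
  have h := hconn r1 h1 r2 h2
  induction h with
  | refl => rfl
  | tail _ hrel ih =>
      rename_i x c _
      rcases hrel with ⟨hx, hc, hcmp | hcmp⟩
      · exact (ih hx).trans (lower_step K M L q hx hc hcmp)
      · exact (ih hx).trans (lower_step K M L q hc hx hcmp).symm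

lemma upper_step (U : Set P) (q : P) {x c : P}
    (hx : x ∈ U ∩ {r | q ≤ r}) (hc : c ∈ U ∩ {r | q ≤ r}) (hxc : x ≤ c) :
    M.map (homOfLE hx.2) ≫ colimit.ι (restrict K M U) ⟨x, hx.1⟩ =
    M.map (homOfLE hc.2) ≫ colimit.ι (restrict K M U) ⟨c, hc.1⟩ := by
  have w := colimit.w (restrict K M U) (homOfLE (show (⟨x, hx.1⟩ : U) ≤ ⟨c, hc.1⟩ from hxc))
  rw [← w]
  exact (Category.assoc _ _ _).symm.trans (congrArg (· ≫ colimit.ι (restrict K M U) ⟨c, hc.1⟩) (M.map_comp (homOfLE hx.2) (homOfLE hxc)).symm)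

lemma upper_indep (U : Set P) (q : P) (hconn : ConnectedIn (U ∩ {r | q ≤ r}))
    {r1 r2 : P} (h1 : r1 ∈ U ∩ {r | q ≤ r}) (h2 : r2 ∈ U ∩ {r | q ≤ r}) :
    M.map (homOfLE h1.2) ≫ colimit.ι (restrict K M U) ⟨r1, h1.1⟩ =
    M.map (homOfLE h2.2) ≫ colimit.ι (restrict K M U) ⟨r2, h2.1⟩ := by
  have h := hconn r1 h1 r2 h2
  induction h with
  | refl => rfl
  | tail _ hrel ih =>
      rename_i x c _
      rcases hrel with ⟨hx, hc, hcmp | hcmp⟩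
      · exact (ih hx).trans (upper_step K M U q hx hc hcmp)
      · exact (ih hx).trans (upper_step K M U q hc hx hcmp).symm


open Classical in
/-- Extension of sections from a lower fence. -/
noncomputable def lowerExt (I L : Set P) (hL : IsLowerFenceOf I L) :
    limit (restrict K M L) ⟶ limit (restrict K M I) :=
  limit.lift (restrict K M I)
    { pt := limit (restrict K M L)
      π := { app := fun q =>
               limit.π (restrict K M L) ⟨(hL.2.2 q.1 q.2).1.choose,
                   (hL.2.2 q.1 q.2).1.choose_spec.1⟩ ≫
                 M.map (homOfLE (hL.2.2 q.1 q.2).1.choose_spec.2)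
             naturality := fun q q' f => by
               dsimp
               have hf : f = homOfLE (leOfHom f) := rfl
               erw [Category.id_comp, Category.assoc, hf, restrict_map K M I, ← M.map_comp, homOfLE_comp]
               exact (lower_indep K M L q'.1 (hL.2.2 q'.1 q'.2).2
                 ⟨(hL.2.2 q'.1 q'.2).1.choose_spec.1, (hL.2.2 q'.1 q'.2).1.choose_spec.2⟩
                 ⟨(hL.2.2 q.1 q.2).1.choose_spec.1,
                   le_trans (hL.2.2 q.1 q.2).1.choose_spec.2 (Subtype.coe_le_coe.2 (leOfHom f))⟩) } }

open Classical in
lemma lowerExt_π (I L : Set P) (hL : IsLowerFenceOf I L) (r : P) (hr : r ∈ L) (hrI : r ∈ I) :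
    lowerExt K M I L hL ≫ limit.π (restrict K M I) ⟨r, hrI⟩ =
      limit.π (restrict K M L) ⟨r, hr⟩ := by
  rw [lowerExt, limit.lift_π]
  have := lower_indep K M L r (hL.2.2 r (hL.1 hr)).2
    (hL.2.2 r (hL.1 hr)).1.choose_spec (⟨hr, le_refl r⟩ : r ∈ L ∩ {s | s ≤ r})
  dsimp at this ⊢
  erw [this]
  erw [M.map_id]
  exact Category.comp_id _

open Classical in
/-- Descent of colimit classes to an upper fence. -/
noncomputable def upperDesc (I U : Set P) (hU : IsUpperFenceOf I U) :
    colimit (restrict K M I) ⟶ colimit (restrict K M U) :=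
  colimit.desc (restrict K M I)
    { pt := colimit (restrict K M U)
      ι := { app := fun q =>
               M.map (homOfLE (hU.2.2 q.1 q.2).1.choose_spec.2) ≫
                 colimit.ι (restrict K M U) ⟨(hU.2.2 q.1 q.2).1.choose,
                   (hU.2.2 q.1 q.2).1.choose_spec.1⟩
             naturality := fun q q' f => by
               dsimp
               have hf : f = homOfLE (leOfHom f) := rfl
               erw [Category.comp_id, ← Category.assoc, hf, restrict_map K M I, ← M.map_comp, homOfLE_comp]
               exact (upper_indep K M U q.1 (hU.2.2 q.1 q.2).2
                 ⟨(hU.2.2 q'.1 q'.2).1.choose_spec.1,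
                   le_trans (Subtype.coe_le_coe.2 (leOfHom f)) (hU.2.2 q'.1 q'.2).1.choose_spec.2⟩
                 ⟨(hU.2.2 q.1 q.2).1.choose_spec.1, (hU.2.2 q.1 q.2).1.choose_spec.2⟩) } }

open Classical in
lemma ι_upperDesc (I U : Set P) (hU : IsUpperFenceOf I U) (u : P) (hu : u ∈ U) (huI : u ∈ I) :
    colimit.ι (restrict K M I) ⟨u, huI⟩ ≫ upperDesc K M I U hU =
      colimit.ι (restrict K M U) ⟨u, hu⟩ := by
  rw [upperDesc, colimit.ι_desc]
  have := upper_indep K M U u (hU.2.2 u (hU.1 hu)).2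
    (hU.2.2 u (hU.1 hu)).1.choose_spec (⟨hu, le_refl u⟩ : u ∈ U ∩ {s | u ≤ s})
  dsimp at this ⊢
  erw [this]
  rw [M.map_id]
  exact Category.id_comp _

lemma canMap_step (S : Set P) {a b : P} (ha : a ∈ S) (hb : b ∈ S) (hab : a ≤ b) :
    canMap K M S a ha = canMap K M S b hb := by
  have h : (⟨a, ha⟩ : S) ⟶ ⟨b, hb⟩ := homOfLE hab
  unfold canMap
  rw [← colimit.w (restrict K M S) h, ← Category.assoc, limit.w]

lemma canMap_eq_of_connected (S : Set P) (hS : ConnectedIn S) {a b : P} (ha : a ∈ S) (hb : b ∈ S) :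
    canMap K M S a ha = canMap K M S b hb := by
  have h := hS a ha b hb
  induction h with
  | refl => rfl
  | tail _ hrel ih =>
      rename_i x c _
      rcases hrel with ⟨hx, hc, hcmp | hcmp⟩
      · exact (ih hx).trans (canMap_step K M S hx hc hcmp)
      · exact (ih hx).trans (canMap_step K M S hc hx hcmp).symm


end Aux

/-- The generalized rank over an interval `I` can be computed along a path `Γ` through
`I` which is the concatenation of a path through a lower fence `L` of `I`, an arbitrary
connecting path, and a path through an upper fence `U` of `I`:
`rank(M|_I) = rank(M|_Γ)`. -/
theorem generalizedRank_eq_rank_along_path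
    (M : P ⥤ ModuleCat.{0} K) (I : Set P) (hI : IsIntervalSet I)
    (L U : Set P) (hL : IsLowerFenceOf I L) (hU : IsUpperFenceOf I U)
    (Γ₁ Γ₂ Γ₃ : List P)
    (hchain : List.Chain' (fun a b => a ≤ b ∨ b ≤ a) (Γ₁ ++ Γ₂ ++ Γ₃))
    (hsub : ∀ x ∈ Γ₁ ++ Γ₂ ++ Γ₃, x ∈ I)
    (hΓ₁ : {x | x ∈ Γ₁} = L) (hΓ₃ : {x | x ∈ Γ₃} = U)
    (p : P) (hp : p ∈ I)
    (p' : P) (hp' : p' ∈ {x | x ∈ Γ₁ ++ Γ₂ ++ Γ₃}) :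
    LinearMap.rank (canMap K M I p hp).hom
      = LinearMap.rank (canMap K M {x | x ∈ Γ₁ ++ Γ₂ ++ Γ₃} p' hp').hom := by
  have hI' : I.Nonempty ∧ ConvexIn I ∧ ConnectedIn I := hI
  have hΓI : {x | x ∈ Γ₁ ++ Γ₂ ++ Γ₃} ⊆ I := fun x hx => hsub x hx
  have hLΓ : L ⊆ {x | x ∈ Γ₁ ++ Γ₂ ++ Γ₃} := by
    intro x hx
    rw [← hΓ₁] at hx
    show x ∈ Γ₁ ++ Γ₂ ++ Γ₃
    simp only [List.mem_append]
    exact Or.inl (Or.inl hx)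
  have hUΓ : U ⊆ {x | x ∈ Γ₁ ++ Γ₂ ++ Γ₃} := by
    intro x hx
    rw [← hΓ₃] at hx
    show x ∈ Γ₁ ++ Γ₂ ++ Γ₃
    simp only [List.mem_append]
    exact Or.inr hx
  have hΓconn : ConnectedIn {x | x ∈ Γ₁ ++ Γ₂ ++ Γ₃} := connectedIn_of_chain' _ hchain
  obtain ⟨a, haL, -⟩ := (hL.2.2 p hp).1
  obtain ⟨z, hzU, -⟩ := (hU.2.2 p hp).1
  have haΓ : a ∈ {x | x ∈ Γ₁ ++ Γ₂ ++ Γ₃} := hLΓ haL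
  have hzΓ : z ∈ {x | x ∈ Γ₁ ++ Γ₂ ++ Γ₃} := hUΓ hzU
  -- basepoint changes
  have base1 : canMap K M I p hp = canMap K M I p' (hΓI hp') :=
    canMap_eq_of_connected K M I hI'.2.2 hp (hΓI hp')
  have baseA : canMap K M {x | x ∈ Γ₁ ++ Γ₂ ++ Γ₃} p' hp'
      = canMap K M {x | x ∈ Γ₁ ++ Γ₂ ++ Γ₃} a haΓ :=
    canMap_eq_of_connected K M _ hΓconn hp' haΓ
  have baseZ : canMap K M {x | x ∈ Γ₁ ++ Γ₂ ++ Γ₃} p' hp'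
      = canMap K M {x | x ∈ Γ₁ ++ Γ₂ ++ Γ₃} z hzΓ :=
    canMap_eq_of_connected K M _ hΓconn hp' hzΓ
  have E1 : resLim K M hΓI ≫ canMap K M {x | x ∈ Γ₁ ++ Γ₂ ++ Γ₃} p' hp' ≫ resColim K M hΓI
      = canMap K M I p hp := by
    rw [base1]
    unfold canMap
    erw [Category.assoc (limit.π (restrict K M {x | x ∈ Γ₁ ++ Γ₂ ++ Γ₃}) ⟨p', hp'⟩), ι_resColim K M hΓI p' hp' (hΓI hp'),
      ← Category.assoc (resLim K M hΓI), resLim_π K M hΓI p' hp' (hΓI hp')]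
    rfl
  have E2 : (resLim K M hLΓ ≫ lowerExt K M I L hL) ≫
      (resLim K M hΓI ≫ canMap K M {x | x ∈ Γ₁ ++ Γ₂ ++ Γ₃} p' hp')
      = canMap K M {x | x ∈ Γ₁ ++ Γ₂ ++ Γ₃} p' hp' := by
    rw [baseA]
    unfold canMap
    erw [Category.assoc (resLim K M hLΓ), ← Category.assoc (resLim K M hΓI), resLim_π K M hΓI a haΓ (hL.1 haL),
      ← Category.assoc (lowerExt K M I L hL), lowerExt_π K M I L hL a haL (hL.1 haL),
      ← Category.assoc (resLim K M hLΓ), resLim_π K M hLΓ a haL haΓ]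
  have E3 : (resLim K M hΓI ≫ canMap K M {x | x ∈ Γ₁ ++ Γ₂ ++ Γ₃} p' hp' ≫ resColim K M hΓI) ≫
      (upperDesc K M I U hU ≫ resColim K M hUΓ)
      = resLim K M hΓI ≫ canMap K M {x | x ∈ Γ₁ ++ Γ₂ ++ Γ₃} p' hp' := by
    rw [baseZ]
    unfold canMap
    erw [Category.assoc (resLim K M hΓI),
      Category.assoc (limit.π (restrict K M {x | x ∈ Γ₁ ++ Γ₂ ++ Γ₃}) ⟨z, hzΓ⟩ ≫ colimit.ι (restrict K M {x | x ∈ Γ₁ ++ Γ₂ ++ Γ₃}) ⟨z, hzΓ⟩),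
      Category.assoc (limit.π (restrict K M {x | x ∈ Γ₁ ++ Γ₂ ++ Γ₃}) ⟨z, hzΓ⟩),
      ← Category.assoc (colimit.ι (restrict K M {x | x ∈ Γ₁ ++ Γ₂ ++ Γ₃}) ⟨z, hzΓ⟩), ι_resColim K M hΓI z hzΓ (hU.1 hzU),
      ← Category.assoc (colimit.ι (restrict K M I) ⟨z, hU.1 hzU⟩), ι_upperDesc K M I U hU z hzU (hU.1 hzU),
      ι_resColim K M hUΓ z hzU hzΓ]
  have le1 : LinearMap.rank (canMap K M I p hp).hom
      ≤ LinearMap.rank (canMap K M {x | x ∈ Γ₁ ++ Γ₂ ++ Γ₃} p' hp').hom := by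
    rw [← E1]
    calc LinearMap.rank (resLim K M hΓI ≫
            canMap K M {x | x ∈ Γ₁ ++ Γ₂ ++ Γ₃} p' hp' ≫ resColim K M hΓI).hom
        ≤ LinearMap.rank (canMap K M {x | x ∈ Γ₁ ++ Γ₂ ++ Γ₃} p' hp' ≫ resColim K M hΓI).hom :=
          LinearMap.rank_comp_le_left _ _
      _ ≤ LinearMap.rank (canMap K M {x | x ∈ Γ₁ ++ Γ₂ ++ Γ₃} p' hp').hom :=
          LinearMap.rank_comp_le_right _ _
  have le2 : LinearMap.rank (canMap K M {x | x ∈ Γ₁ ++ Γ₂ ++ Γ₃} p' hp').hom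
      ≤ LinearMap.rank (canMap K M I p hp).hom := by
    calc LinearMap.rank (canMap K M {x | x ∈ Γ₁ ++ Γ₂ ++ Γ₃} p' hp').hom
        = LinearMap.rank ((resLim K M hLΓ ≫ lowerExt K M I L hL) ≫
            (resLim K M hΓI ≫ canMap K M {x | x ∈ Γ₁ ++ Γ₂ ++ Γ₃} p' hp')).hom := by rw [E2]
      _ ≤ LinearMap.rank (resLim K M hΓI ≫ canMap K M {x | x ∈ Γ₁ ++ Γ₂ ++ Γ₃} p' hp').hom :=
          LinearMap.rank_comp_le_left _ _
      _ = LinearMap.rank ((resLim K M hΓI ≫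
            canMap K M {x | x ∈ Γ₁ ++ Γ₂ ++ Γ₃} p' hp' ≫ resColim K M hΓI) ≫
            (upperDesc K M I U hU ≫ resColim K M hUΓ)).hom := by rw [E3]
      _ ≤ LinearMap.rank (resLim K M hΓI ≫
            canMap K M {x | x ∈ Γ₁ ++ Γ₂ ++ Γ₃} p' hp' ≫ resColim K M hΓI).hom :=
          LinearMap.rank_comp_le_right _ _
      _ = LinearMap.rank (canMap K M I p hp).hom := by rw [E1]
  exact le_antisymm le1 le2
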